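/- Under the hypotheses of the LFR factorization Â = L·(Q + TZᴴ)·R with Â = [[A,*],[0,0]] and A upper Hessenberg of size n: if R is proper (all outermost entries r_{i+k,i} ≠ 0 for i = 1,...,n), then A is nonsingular. -/

import Mathlib

/-!
The last `k` rows `S` of `L` satisfy `S T = -Tk⁻¹ Tk = -1`, so `S` annihilates the middle factor
`P = Q + T S Q` and the last `k` rows of `Â = L P R` vanish. If `A v = 0`, the padded vector
`w = (v, 0)` therefore satisfies `Â w = 0`, hence `P R w = 0` because `L` is unitary. As `T`
vanishes below row `k`, so does `Q R w`, and since `Q = diag(I_k, Q̂)` is unitary, so does `R w`.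
Rows `k + 1, …, n + k` of `R` restricted to the first `n` columns form an upper triangular block
with diagonal `r_{i+k,i} ≠ 0`, so `v = 0`.
-/

open Matrix

variable {α : Type*}

lemma Fin.sum_univ_eq_sum_castLE_of_eq_zero [AddCommMonoid α] {N k : ℕ} (hk : k ≤ N)
    (f : Fin N → α) (hf : ∀ i : Fin N, k ≤ (i : ℕ) → f i = 0) :
    ∑ i, f i = ∑ i : Fin k, f (Fin.castLE hk i) := by
  obtain ⟨m, rfl⟩ := Nat.exists_eq_add_of_le hk
  rw [Fin.sum_univ_add, Fintype.sum_eq_zero (fun i => f (Fin.natAdd k i))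
    (fun i => hf _ (by simp)), add_zero]
  rfl

namespace Matrix

lemma mul_eq_submatrix_castLE_mul [NonUnitalNonAssocSemiring α] {l m : Type*} [Fintype l]
    {N k : ℕ} (hk : k ≤ N) (S : Matrix l (Fin N) α) (T : Matrix (Fin N) m α)
    (hT : ∀ i : Fin N, k ≤ (i : ℕ) → ∀ j, T i j = 0) :
    S * T = S.submatrix id (Fin.castLE hk) * T.submatrix (Fin.castLE hk) id := by
  ext i j
  exact Fin.sum_univ_eq_sum_castLE_of_eq_zero hk _ fun c hc => by simp [hT c hc]

lemma mulVec_finAppend_zero [NonUnitalNonAssocSemiring α] {m : Type*} {n k : ℕ}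
    (M : Matrix m (Fin (n + k)) α) (v : Fin n → α) :
    M *ᵥ Fin.append v 0 = M.submatrix id (Fin.castAdd k) *ᵥ v := by
  ext i
  simp [mulVec, dotProduct, Fin.sum_univ_add]

lemma eq_zero_of_mem_unitaryGroup_of_mulVec_eq_zero [CommRing α] [StarRing α] {m : Type*}
    [Fintype m] [DecidableEq m] {U : Matrix m m α} (hU : U ∈ unitaryGroup m α) {x : m → α}
    (h : U *ᵥ x = 0) : x = 0 := by
  simpa [mulVec_mulVec, (mem_unitaryGroup_iff').1 hU] using congrArg (star U *ᵥ ·) h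

lemma apply_eq_zero_of_mulVec_apply_eq_zero [CommRing α] [StarRing α] {N k : ℕ}
    {Q : Matrix (Fin N) (Fin N) α} (hQ : Q ∈ unitaryGroup (Fin N) α)
    (hQblock : ∀ i j : Fin N, (i : ℕ) < k → k ≤ (j : ℕ) → Q i j = 0) {u : Fin N → α}
    (hu : ∀ i : Fin N, k ≤ (i : ℕ) → (Q *ᵥ u) i = 0) (i : Fin N) (hi : k ≤ (i : ℕ)) :
    u i = 0 := by
  have hstar : u = star Q *ᵥ (Q *ᵥ u) := by
    rw [mulVec_mulVec, (mem_unitaryGroup_iff').1 hQ, one_mulVec]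
  rw [hstar]
  refine Fintype.sum_eq_zero (fun j => star Q i j * (Q *ᵥ u) j) fun j => ?_
  rcases lt_or_ge (j : ℕ) k with hj | hj
  · simp [hQblock j i hj hi]
  · simp [hu j hj]

lemma det_submatrix_addNat_castAdd_ne_zero [CommRing α] [IsDomain α] {n k : ℕ}
    (R : Matrix (Fin (n + k)) (Fin (n + k)) α)
    (hRhess : ∀ i j : Fin (n + k), (j : ℕ) + k < (i : ℕ) → R i j = 0)
    (hRprop : ∀ i j : Fin (n + k), (i : ℕ) = (j : ℕ) + k → R i j ≠ 0) :
    (R.submatrix (Fin.addNat · k) (Fin.castAdd k)).det ≠ 0 := by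
  have hupper : (R.submatrix (Fin.addNat · k) (Fin.castAdd k)).IsUpperTriangular :=
    fun i j hji => hRhess _ _ (by simpa using hji)
  rw [det_of_isUpperTriangular hupper]
  exact Finset.prod_ne_zero_iff.2 fun i _ => hRprop _ _ (by simp)

lemma mul_add_mul_mul_eq_zero [Ring α] {l m o : Type*} [Fintype l] [Fintype m] [DecidableEq l]
    {S : Matrix l m α} {T : Matrix m l α} (hST : S * T = -1) (Q : Matrix m o α) :
    S * (Q + T * (S * Q)) = 0 := by
  rw [Matrix.mul_add, ← Matrix.mul_assoc, hST, Matrix.neg_mul, Matrix.one_mul, add_neg_cancel]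

lemma apply_eq_zero_of_add_mul_mulVec_eq_zero [CommRing α] [StarRing α] {N k : ℕ}
    {Q : Matrix (Fin N) (Fin N) α} (hQ : Q ∈ unitaryGroup (Fin N) α)
    (hQblock : ∀ i j : Fin N, (i : ℕ) < k → k ≤ (j : ℕ) → Q i j = 0)
    {T : Matrix (Fin N) (Fin k) α} (hT : ∀ i : Fin N, k ≤ (i : ℕ) → ∀ j, T i j = 0)
    (S : Matrix (Fin k) (Fin N) α) {u : Fin N → α} (h : (Q + T * (S * Q)) *ᵥ u = 0)
    (i : Fin N) (hi : k ≤ (i : ℕ)) : u i = 0 := by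
  refine apply_eq_zero_of_mulVec_apply_eq_zero hQ hQblock (fun i hi => ?_) i hi
  have hTi : (T *ᵥ (S *ᵥ (Q *ᵥ u))) i = 0 := by simp [mulVec, dotProduct, hT i hi]
  simpa [add_mulVec, ← mulVec_mulVec, hTi] using congrFun h i

end Matrix

theorem stmt_12 {n k : ℕ}
    (L R Q : Matrix (Fin (n + k)) (Fin (n + k)) ℂ)
    (hL : L ∈ Matrix.unitaryGroup (Fin (n + k)) ℂ)
    (hRhess : ∀ i j : Fin (n + k), (j : ℕ) + k < (i : ℕ) → R i j = 0)
    (hQ : Q ∈ Matrix.unitaryGroup (Fin (n + k)) ℂ)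
    (hQblock : ∀ i j : Fin (n + k), ((i : ℕ) < k ∨ (j : ℕ) < k) → Q i j = if i = j then 1 else 0)
    (Tk : Matrix (Fin k) (Fin k) ℂ)
    (hTkUnit : IsUnit Tk.det)
    (T : Matrix (Fin (n + k)) (Fin k) ℂ)
    (hTtop : ∀ i j : Fin k, T (Fin.castLE (Nat.le_add_left k n) i) j = Tk i j)
    (hTbot : ∀ i : Fin (n + k), k ≤ (i : ℕ) → ∀ j, T i j = 0)
    (hLbot : ∀ i j : Fin k, L ⟨n + (i : ℕ), by have := i.isLt; omega⟩ (Fin.castLE (Nat.le_add_left k n) j) = (-Tk⁻¹) i j)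
    (hRprop : ∀ i j : Fin (n + k), (i : ℕ) = (j : ℕ) + k → R i j ≠ 0) :
    ∀ Ahat : Matrix (Fin (n + k)) (Fin (n + k)) ℂ,
      Ahat = L * (Q + T * ((Matrix.of fun (i : Fin k) (j : Fin (n + k)) => L ⟨n + (i : ℕ), by have := i.isLt; omega⟩ j) * Q)) * R →
      IsUnit (Matrix.det (Matrix.of fun i j : Fin n =>
        Ahat (Fin.castLE (Nat.le_add_right n k) i) (Fin.castLE (Nat.le_add_right n k) j))) := by
  rintro Ahat rfl
  set S : Matrix (Fin k) (Fin (n + k)) ℂ := L.submatrix (Fin.natAdd n) id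
  set P := Q + T * (S * Q)
  have hST : S * T = -1 := by
    have hS : S.submatrix id (Fin.castLE (Nat.le_add_left k n)) = -Tk⁻¹ := by
      ext i j; exact hLbot i j
    have hT : T.submatrix (Fin.castLE (Nat.le_add_left k n)) id = Tk := by
      ext i j; exact hTtop i j
    rw [mul_eq_submatrix_castLE_mul (Nat.le_add_left k n) S T hTbot, hS, hT, Matrix.neg_mul,
      nonsing_inv_mul Tk hTkUnit]
  have hQblock' : ∀ i j : Fin (n + k), (i : ℕ) < k → k ≤ (j : ℕ) → Q i j = 0 := fun i j hi hj =>
    (hQblock i j (.inl hi)).trans (if_neg (Fin.ne_of_val_ne (by omega)))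
  rw [isUnit_iff_ne_zero, Ne, ← exists_mulVec_eq_zero_iff]
  rintro ⟨v, hv, hAv⟩
  have hPRw : P *ᵥ (R *ᵥ Fin.append v 0) = 0 := by
    refine eq_zero_of_mem_unitaryGroup_of_mulVec_eq_zero hL (funext fun i => ?_)
    refine Fin.addCases (fun r => ?_) (fun r => ?_) i
    · rw [mulVec_mulVec, mulVec_mulVec, mulVec_finAppend_zero]
      exact congrFun hAv r
    · change (S *ᵥ _) r = 0
      rw [mulVec_mulVec, mul_add_mul_mul_eq_zero hST, zero_mulVec]
      rfl
  have hBv : R.submatrix (Fin.addNat · k) (Fin.castAdd k) *ᵥ v = 0 := funext fun j => by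
    have hu := apply_eq_zero_of_add_mul_mulVec_eq_zero hQ hQblock' hTbot S hPRw (j.addNat k)
      (by simp)
    rwa [mulVec_finAppend_zero] at hu
  exact det_submatrix_addNat_castAdd_ne_zero R hRhess hRprop
    (exists_mulVec_eq_zero_iff.1 ⟨v, hv, hBv⟩)
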